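/- The map c ↦ (c' , s), sending a nonempty sequence c ∈ Σ₄^n with ℓ-RLL, last run s, and synthesis time ≤ T to the pair consisting of its prefix c' of length n - |s| and its last run, is a bijection between C(n, s, T) and the union over runs s' with e(s') ≠ e(s) of C(n - |s|, s', T - 4(|s|-1) - ((e(s) - e(s')) mod 4)), whenever n > |s|. -/

import Mathlib

open scoped Classical

/-- Shifted modulo: maps any integer to {1,2,3,4}, with `smod x ≡ x [ZMOD 4]`. -/
def smod (x : ℤ) : ℤ := (x - 1) % 4 + 1

/-- Auxiliary synthesis-time sum over the differential sequence. -/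
def synthAux : ℤ → List ℤ → ℤ
  | _, [] => 0
  | prev, b :: rest => smod (b - prev) + synthAux b rest

/-- Synthesis time `T(c) = Σ dᵢ(c)` with `d₁ = c₁`, `dᵢ = (cᵢ - c_{i-1}) mod 4` (shifted). -/
def synth : List ℤ → ℤ
  | [] => 0
  | a :: rest => a + synthAux a rest

/-- Membership in the alphabet Σ₄ = {1,2,3,4}. -/
def inSigma4 (c : List ℤ) : Prop := ∀ x ∈ c, 1 ≤ x ∧ x ≤ 4

/-- ℓ-runlength-limited: no ℓ+1 consecutive equal symbols. -/
def RLL (ℓ : ℕ) (c : List ℤ) : Prop :=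
  ∀ a ∈ c, ¬ (List.replicate (ℓ + 1) a <:+: c)

/-- The last (maximal constant) run of `c` is `{a}^t`. -/
def lastRunIs (c : List ℤ) (a : ℤ) (t : ℕ) : Prop :=
  List.replicate t a <:+ c ∧ ¬ (List.replicate (t + 1) a <:+ c)

/-- The finite set of all length-`n` sequences over Σ₄ = {1,2,3,4}. -/
def seqs (n : ℕ) : Finset (List ℤ) :=
  (Finset.univ : Finset (Fin n → Fin 4)).image
    (fun f => (List.ofFn f).map (fun x : Fin 4 => ((x : ℕ) : ℤ) + 1))

/-- GC-content: number of symbols greater than 2 (i.e. C or G). -/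
def gc (c : List ℤ) : ℕ := (c.filter (fun x => 2 < x)).length

/-- Length-`n` ℓ-RLL sequences with last run `{a}^t` and synthesis time at most `T`. -/
noncomputable def Cset (n ℓ : ℕ) (a : ℤ) (t : ℕ) (T : ℤ) : Finset (List ℤ) :=
  (seqs n).filter (fun c => RLL ℓ c ∧ lastRunIs c a t ∧ synth c ≤ T)

noncomputable def Ncount (n ℓ : ℕ) (a : ℤ) (t : ℕ) (T : ℤ) : ℕ := (Cset n ℓ a t T).card

/-!
A sequence `c ∈ C(n, {a}^t, T)` with `t < n` is `c' ++ a^t` where `c'` is nonempty and does not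
end in `a`; its own last run `{b}^u` therefore has `b ≠ a`, and `u ≤ ℓ` by the run-length limit.
Conversely, appending `a^t` with `t ≤ ℓ` to such a `c'` creates no run longer than `ℓ`, because
the new run cannot merge with the last run of `c'`. The synthesis time splits as
`T(c) = T(c') + ((a - b) mod 4) + 4 (t - 1)`, each repeated symbol costing `smod 0 = 4`.
-/

lemma synthAux_append (prev : ℤ) (l m : List ℤ) :
    synthAux prev (l ++ m) = synthAux prev l + synthAux (l.getLastD prev) m := by
  induction l generalizing prev with
  | nil => simp [synthAux]
  | cons x xs ih =>
    simp only [List.cons_append, synthAux, ih x, List.getLastD_cons]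
    ring

lemma synthAux_replicate_self (a : ℤ) (s : ℕ) : synthAux a (List.replicate s a) = 4 * s := by
  induction s with
  | zero => simp [synthAux]
  | succ s ih =>
    rw [List.replicate_succ, synthAux, ih, sub_self]
    push_cast
    rw [show smod 0 = 4 from rfl]
    ring

lemma synthAux_replicate (b a : ℤ) {t : ℕ} (ht : t ≠ 0) :
    synthAux b (List.replicate t a) = smod (a - b) + 4 * ((t : ℤ) - 1) := by
  obtain ⟨s, rfl⟩ := Nat.exists_eq_succ_of_ne_zero ht
  rw [List.replicate_succ, synthAux, synthAux_replicate_self]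
  push_cast
  ring

lemma synth_append_of_singleton_suffix {b : ℤ} {c : List ℤ} (hb : [b] <:+ c) (d : List ℤ) :
    synth (c ++ d) = synth c + synthAux b d := by
  obtain _ | ⟨x, xs⟩ := c
  · simp at hb
  · rw [List.singleton_suffix_iff_getLast?_eq_some, List.getLast?_cons, Option.some_inj,
      ← List.getLastD_eq_getLast?] at hb
    simp only [List.cons_append, synth, synthAux_append, hb]
    ring

lemma synth_append_replicate {a b : ℤ} {c : List ℤ} {t : ℕ} (hb : [b] <:+ c) (ht : t ≠ 0) :
    synth (c ++ List.replicate t a) = synth c + smod (a - b) + 4 * ((t : ℤ) - 1) := by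
  rw [synth_append_of_singleton_suffix hb, synthAux_replicate b a ht, add_assoc]

lemma List.exists_singleton_suffix {α : Type*} {l : List α} (h : l ≠ []) : ∃ b, [b] <:+ l :=
  ⟨l.getLast h, l.dropLast, l.dropLast_append_getLast h⟩

lemma List.singleton_suffix_unique {α : Type*} {a b : α} {l : List α} (ha : [a] <:+ l)
    (hb : [b] <:+ l) : a = b := by
  rw [List.singleton_suffix_iff_getLast?_eq_some] at ha hb
  exact Option.some_injective _ (ha.symm.trans hb)

lemma mem_seqs_iff {n : ℕ} {c : List ℤ} : c ∈ seqs n ↔ c.length = n ∧ inSigma4 c := by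
  constructor
  · intro hc
    obtain ⟨f, -, rfl⟩ := Finset.mem_image.mp hc
    refine ⟨by simp, fun x hx => ?_⟩
    simp only [List.mem_map, List.mem_ofFn] at hx
    obtain ⟨y, ⟨i, rfl⟩, rfl⟩ := hx
    have := (f i).isLt
    omega
  · rintro ⟨rfl, hsig⟩
    refine Finset.mem_image.mpr ⟨fun i => ⟨(c.get i - 1).toNat, ?_⟩, Finset.mem_univ _, ?_⟩
    · have := hsig _ (List.get_mem c i)
      omega
    · refine List.ext_getElem (by simp) fun i _ h => ?_
      have := hsig _ (List.getElem_mem h)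
      simp only [List.getElem_map, List.getElem_ofFn, List.get_eq_getElem]
      omega

lemma mem_Cset_iff {n ℓ t : ℕ} {a T : ℤ} {c : List ℤ} :
    c ∈ Cset n ℓ a t T ↔
      c.length = n ∧ inSigma4 c ∧ RLL ℓ c ∧ lastRunIs c a t ∧ synth c ≤ T := by
  simp only [Cset, Finset.mem_filter, mem_seqs_iff, and_assoc]

section Runs

variable {ℓ : ℕ} {c : List ℤ}

lemma RLL.of_infix {d : List ℤ} (hd : RLL ℓ d) (h : c <:+: d) : RLL ℓ c :=
  fun x hx hinf => hd x (h.subset hx) (hinf.trans h)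

lemma RLL.append_replicate {a : ℤ} {t : ℕ} (hc : RLL ℓ c) (htℓ : t ≤ ℓ) (ha : ¬ [a] <:+ c) :
    RLL ℓ (c ++ List.replicate t a) := by
  intro x _ hx
  rcases List.infix_append_iff_ne_nil.mp hx with hin | hin | ⟨l₁, l₂, h₁, h₂, heq, hl₁, hl₂⟩
  · exact hc x (hin.subset (List.mem_replicate.mpr ⟨by omega, rfl⟩)) hin
  · have := hin.length_le
    simp only [List.length_replicate] at this
    omega
  · obtain ⟨-, hrep₁, hrep₂⟩ := List.append_eq_replicate_iff.mp heq.symm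
    obtain ⟨y, hy⟩ := List.exists_mem_of_ne_nil l₂ h₂
    have hxy : y = x := List.eq_of_mem_replicate (hrep₂ ▸ hy)
    have hya : y = a := List.eq_of_mem_replicate (hl₂.subset hy)
    subst hxy hya
    refine ha (List.IsSuffix.trans ?_ hl₁)
    rw [hrep₁, List.suffix_replicate_iff]
    simpa [Nat.one_le_iff_ne_zero] using h₁

lemma lastRunIs.le_of_RLL {b : ℤ} {u : ℕ} (h : lastRunIs c b u) (hc : RLL ℓ c) : u ≤ ℓ := by
  by_contra! hu
  have hsuf : List.replicate (ℓ + 1) b <:+ c :=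
    (List.suffix_replicate_iff.mpr ⟨by simpa using hu, by simp⟩).trans h.1
  exact hc b (hsuf.subset (List.mem_replicate.mpr ⟨by omega, rfl⟩)) hsuf.isInfix

lemma lastRunIs.singleton_suffix {b : ℤ} {u : ℕ} (h : lastRunIs c b u) (hu : u ≠ 0) :
    [b] <:+ c :=
  (List.suffix_replicate_iff.mpr ⟨by simpa [Nat.one_le_iff_ne_zero] using hu, rfl⟩).trans h.1

lemma exists_lastRunIs {b : ℤ} (hb : [b] <:+ c) : ∃ u, u ≠ 0 ∧ lastRunIs c b u := by
  have hex : ∃ u, ¬ List.replicate (u + 1) b <:+ c :=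
    ⟨c.length, fun h => by simpa using h.length_le⟩
  refine ⟨Nat.find hex, fun h0 => Nat.find_spec hex (h0 ▸ hb), ?_, Nat.find_spec hex⟩
  cases hu : Nat.find hex with
  | zero => simp
  | succ u => exact not_not.mp (Nat.find_min hex (by omega))

lemma lastRunIs_append_replicate_iff {a : ℤ} {t : ℕ} :
    lastRunIs (c ++ List.replicate t a) a t ↔ ¬ [a] <:+ c := by
  rw [lastRunIs, List.replicate_succ, ← List.singleton_append, List.suffix_append_self_iff]
  simp

end Runs

/-- The paper's union, over runs `s' = {b}^u` with `b ≠ a`, of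
`C(n - t, s', T - 4(t - 1) - ((a - b) mod 4))`. -/
noncomputable def Cprefix (n ℓ : ℕ) (a : ℤ) (t : ℕ) (T : ℤ) : Finset (List ℤ) :=
  Finset.biUnion ((({1, 2, 3, 4} : Finset ℤ).erase a) ×ˢ Finset.Icc 1 ℓ)
    (fun p => Cset (n - t) ℓ p.1 p.2 (T - 4 * ((t : ℤ) - 1) - smod (a - p.1)))

section Decomposition

variable {n ℓ t : ℕ} {a T : ℤ} {c : List ℤ}

lemma take_append_replicate_of_mem_Cset (hc : c ∈ Cset n ℓ a t T) :
    c.take (n - t) ++ List.replicate t a = c := by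
  obtain ⟨hlen, -, -, hrun, -⟩ := mem_Cset_iff.mp hc
  simpa [hlen] using List.suffix_iff_eq_append.mp hrun.1

lemma length_of_mem_Cprefix (hc : c ∈ Cprefix n ℓ a t T) : c.length = n - t := by
  obtain ⟨_, _, hmem⟩ := Finset.mem_biUnion.mp hc
  exact (mem_Cset_iff.mp hmem).1

lemma mem_Cprefix_of_append_replicate_mem_Cset (ht : t ≠ 0) (hn : t < n)
    (hc : c ++ List.replicate t a ∈ Cset n ℓ a t T) : c ∈ Cprefix n ℓ a t T := by
  obtain ⟨hlen, hsig, hR, hrun, hT⟩ := mem_Cset_iff.mp hc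
  simp only [List.length_append, List.length_replicate] at hlen
  obtain ⟨b, hb⟩ := List.exists_singleton_suffix (l := c) (by rintro rfl; simp at hlen; omega)
  obtain ⟨u, hu, hrun'⟩ := exists_lastRunIs hb
  have hba : b ≠ a := by
    rintro rfl
    exact lastRunIs_append_replicate_iff.mp hrun hb
  have hsig' : inSigma4 c := fun x hx => hsig x (List.mem_append_left _ hx)
  have hb_range := hsig' b (hb.subset (List.mem_singleton_self b))
  have hR' : RLL ℓ c := hR.of_infix List.infix_append_left
  have huℓ := hrun'.le_of_RLL hR'
  refine Finset.mem_biUnion.mpr ⟨(b, u), ?_, mem_Cset_iff.mpr ⟨by omega, hsig', hR', hrun', ?_⟩⟩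
  · simp only [Finset.mem_product, Finset.mem_erase, Finset.mem_insert, Finset.mem_singleton,
      Finset.mem_Icc]
    omega
  · rw [synth_append_replicate hb ht] at hT
    linarith

lemma append_replicate_mem_Cset_of_mem_Cprefix (ht : t ≠ 0) (htℓ : t ≤ ℓ) (ha : 1 ≤ a ∧ a ≤ 4)
    (hn : t ≤ n) (hc : c ∈ Cprefix n ℓ a t T) : c ++ List.replicate t a ∈ Cset n ℓ a t T := by
  obtain ⟨⟨b, u⟩, hbu, hc⟩ := Finset.mem_biUnion.mp hc
  simp only [Finset.mem_product, Finset.mem_erase, Finset.mem_Icc] at hbu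
  obtain ⟨⟨hba, -⟩, hu, -⟩ := hbu
  obtain ⟨hlen, hsig, hR, hrun, hT⟩ := mem_Cset_iff.mp hc
  have hb : [b] <:+ c := hrun.singleton_suffix (by omega)
  have ha' : ¬ [a] <:+ c := fun h => hba (List.singleton_suffix_unique hb h)
  refine mem_Cset_iff.mpr ⟨by simp; omega, ?_, hR.append_replicate htℓ ha',
    lastRunIs_append_replicate_iff.mpr ha', ?_⟩
  · intro x hx
    rcases List.mem_append.mp hx with hx | hx
    · exact hsig x hx
    · exact List.eq_of_mem_replicate hx ▸ ha
  · rw [synth_append_replicate hb ht]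
    linarith

end Decomposition

theorem stmt11_general (n ℓ t : ℕ) (a : ℤ) (T : ℤ)
    (ht : 1 ≤ t) (htℓ : t ≤ ℓ) (ha : 1 ≤ a ∧ a ≤ 4) (hn : t < n) :
    Set.BijOn (fun c : List ℤ => c.take (n - t)) (Cset n ℓ a t T : Set (List ℤ))
      ((Finset.biUnion ((({1, 2, 3, 4} : Finset ℤ).erase a) ×ˢ Finset.Icc 1 ℓ)
        (fun p => Cset (n - t) ℓ p.1 p.2
          (T - 4 * ((t : ℤ) - 1) - smod (a - p.1)))) : Set (List ℤ)) := by
  have ht₀ : t ≠ 0 := by omega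
  change Set.BijOn _ _ (Cprefix n ℓ a t T : Set (List ℤ))
  refine Set.InvOn.bijOn (f' := (· ++ List.replicate t a))
    ⟨fun c hc => take_append_replicate_of_mem_Cset hc,
      fun c hc => List.take_left' (length_of_mem_Cprefix hc)⟩ (fun c hc => ?_)
    (fun c hc => append_replicate_mem_Cset_of_mem_Cprefix ht₀ htℓ ha hn.le hc)
  rw [Finset.mem_coe, ← take_append_replicate_of_mem_Cset hc] at hc
  exact mem_Cprefix_of_append_replicate_mem_Cset ht₀ hn hc

theorem stmt11 (n ℓ t : ℕ) (a : ℤ) (T : ℤ)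
    (hℓ : 1 ≤ ℓ) (ht : 1 ≤ t) (htℓ : t ≤ ℓ) (ha : 1 ≤ a ∧ a ≤ 4) (hn : t < n) :
    Set.BijOn (fun c : List ℤ => c.take (n - t)) (Cset n ℓ a t T : Set (List ℤ))
      ((Finset.biUnion ((({1, 2, 3, 4} : Finset ℤ).erase a) ×ˢ Finset.Icc 1 ℓ)
        (fun p => Cset (n - t) ℓ p.1 p.2
          (T - 4 * ((t : ℤ) - 1) - smod (a - p.1)))) : Set (List ℤ)) :=
  stmt11_general n ℓ t a T ht htℓ ha hn
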